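/- arXiv:2210.03700 — 2 statements merged into one kernel-verified Lean document; each statement's English description precedes it below -/
import Mathlib

section
/- Let I define a connected graph on {1,...,n} and let D_{ij,1}, D_{ij,2} > 0 for (i,j) ∈ I. Define h_{ij} = D_{ij,2}/D_{ij,1}. Then the data is consistent (h multiplies to 1 along every cycle of the graph) if and only if there exists m ∈ ℝ^n with m_1 = 0 such that D_{ij,2}/D_{ij,1} = F(m_i − m_j)/F(m_j − m_i) for all (i,j) ∈ I, where F is the logistic c.d.f. -/
noncomputable def F (x : ℝ) : ℝ := 1 / (1 + Real.exp (-x))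

/-!
Writing `D2 i j / D1 i j = exp (g (i, j))`, reciprocity makes `g` an antisymmetric function on
darts, and since `F a / F (-a) = exp a` the theorem says that `g` sums to zero along every closed
walk iff `g (i, j) = m i - m j` for some potential `m`. Such a potential is obtained by summing `g`
along a walk from each vertex to the base vertex; closing the walk through an edge shows it works.
-/

open Real

namespace SimpleGraph

variable {V α : Type*} [AddCommGroup α] {G : SimpleGraph V}

theorem Walk.sum_darts_map_reverse {f : G.Dart → α} (hf : ∀ d, f d.symm = -f d)
    {u v : V} (p : G.Walk u v) : (p.reverse.darts.map f).sum = -(p.darts.map f).sum := by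
  rw [Walk.darts_reverse, List.map_reverse, List.sum_reverse, List.map_map]
  induction p.darts with
  | nil => simp
  | cons d l ih => rw [List.map_cons, List.sum_cons, Function.comp_apply, hf, ih, List.map_cons,
      List.sum_cons, neg_add]

theorem Walk.sum_darts_map_eq_sub {f : G.Dart → α} {φ : V → α}
    (hf : ∀ d : G.Dart, f d = φ d.fst - φ d.snd) {u v : V} (p : G.Walk u v) :
    (p.darts.map f).sum = φ u - φ v := by
  induction p with
  | nil => simp
  | cons h p ih =>
    rw [Walk.darts_cons, List.map_cons, List.sum_cons, ih, hf]
    abel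

noncomputable def Preconnected.potential (hG : G.Preconnected) (f : G.Dart → α) (v₀ v : V) : α :=
  ((hG v v₀).some.darts.map f).sum

theorem Preconnected.eq_potential_sub (hG : G.Preconnected) {f : G.Dart → α}
    (hf : ∀ d, f d.symm = -f d) {v₀ : V}
    (hcyc : ∀ (u : V) (p : G.Walk u u), (p.darts.map f).sum = 0) (d : G.Dart) :
    f d = hG.potential f v₀ d.fst - hG.potential f v₀ d.snd := by
  set P : ∀ v, G.Walk v v₀ := fun v => (hG v v₀).some
  have hclosed := hcyc _ ((Walk.cons d.adj (P d.snd)).append (P d.fst).reverse)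
  rw [Walk.darts_append, List.map_append, List.sum_append, Walk.sum_darts_map_reverse hf,
    Walk.darts_cons, List.map_cons, List.sum_cons] at hclosed
  rw [eq_sub_iff_add_eq, ← sub_eq_zero, ← hclosed]
  simp only [potential, P]
  abel

theorem Preconnected.forall_sum_darts_eq_zero_iff (hG : G.Preconnected) {f : G.Dart → α}
    (hf : ∀ d, f d.symm = -f d) (v₀ : V) :
    (∀ (u : V) (p : G.Walk u u), (p.darts.map f).sum = 0) ↔
      ∃ φ : V → α, φ v₀ = 0 ∧ ∀ d : G.Dart, f d = φ d.fst - φ d.snd := by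
  refine ⟨fun hcyc => ⟨hG.potential f v₀, hcyc v₀ _, hG.eq_potential_sub hf hcyc⟩, ?_⟩
  rintro ⟨φ, -, hφ⟩ u p
  rw [Walk.sum_darts_map_eq_sub hφ, sub_self]

end SimpleGraph

theorem F_div_F_neg (a : ℝ) : F a / F (-a) = exp a := by
  have : exp a * exp (-a) = 1 := by rw [← exp_add, add_neg_cancel, exp_zero]
  simp only [F, neg_neg]
  field_simp
  linear_combination -this

theorem F_sub_div_F_sub (x y : ℝ) : F (x - y) / F (y - x) = exp (x - y) := by
  rw [← neg_sub x y, F_div_F_neg]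

theorem consistency_iff_exists_parameters (n : ℕ)
    (G : SimpleGraph (Fin (n + 1))) (hconn : G.Connected)
    (D1 D2 : Fin (n + 1) → Fin (n + 1) → ℝ)
    (hD1 : ∀ i j, G.Adj i j → 0 < D1 i j)
    (hD2 : ∀ i j, G.Adj i j → 0 < D2 i j)
    (hrec : ∀ i j, G.Adj i j → D1 j i = D2 i j ∧ D2 j i = D1 i j) :
    (∀ (i : Fin (n + 1)) (p : G.Walk i i),
        (p.darts.map (fun d => D2 d.toProd.1 d.toProd.2 / D1 d.toProd.1 d.toProd.2)).prod = 1)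
    ↔ ∃ m : Fin (n + 1) → ℝ, m 0 = 0 ∧
        ∀ i j, G.Adj i j →
          D2 i j / D1 i j = F (m i - m j) / F (m j - m i) := by
  set g : G.Dart → ℝ := fun d => log (D2 d.fst d.snd / D1 d.fst d.snd)
  have hexp_g : ∀ d : G.Dart, D2 d.fst d.snd / D1 d.fst d.snd = exp (g d) := fun d =>
    (exp_log (div_pos (hD2 _ _ d.adj) (hD1 _ _ d.adj))).symm
  have hg : ∀ d, g d.symm = -g d := fun d => by
    obtain ⟨h1, h2⟩ := hrec _ _ d.adj
    simp only [g, SimpleGraph.Dart.symm_toProd, Prod.fst_swap, Prod.snd_swap, h1, h2, ← log_inv,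
      inv_div]
  have hprod : ∀ {u v} (p : G.Walk u v), (p.darts.map fun d =>
      D2 d.toProd.1 d.toProd.2 / D1 d.toProd.1 d.toProd.2).prod = exp (p.darts.map g).sum := by
    intro u v p
    simp only [exp_list_sum, List.map_map]
    exact congrArg List.prod (List.map_congr_left fun d _ => hexp_g d)
  simp only [hprod, exp_eq_one_iff, hconn.preconnected.forall_sum_darts_eq_zero_iff hg 0]
  refine exists_congr fun m => and_congr_right fun _ => ?_
  simp only [F_sub_div_F_sub]
  refine ⟨fun h i j hij => ?_, fun h d => ?_⟩
  · rw [hexp_g ⟨(i, j), hij⟩, h]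
  · rw [← exp_eq_exp, ← hexp_g, h _ _ d.adj]
end

section
/- Let m⁰ ∈ ℝ^n with m⁰_1 = 0, let I be a set of pairs whose graph is connected, and define data D_{ij,1} = F(m⁰_j − m⁰_i), D_{ij,2} = F(m⁰_i − m⁰_j) for (i,j) ∈ I, where F is the logistic c.d.f. Then the log-likelihood L(m) = Σ_{(i,j)∈I} [D_{ij,1}·ln F(m_j − m_i) + D_{ij,2}·ln F(m_i − m_j)], restricted to vectors m with m_1 = 0, attains its maximum uniquely at m = m⁰. -/
/-!
By Gibbs' inequality, each compared pair `(i, j)` contributes at most its value at the true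
difference `m⁰ⱼ - m⁰ᵢ`, and it attains this only when `mⱼ - mᵢ = m⁰ⱼ - m⁰ᵢ`, because the logistic
function is injective. Hence `L m ≤ L m⁰`, and equality forces `m - m⁰` to be constant along the
edges of the connected comparison graph, hence constant; the normalisation `m₀ = m⁰₀ = 0` makes
that constant zero.
-/

open Real

lemma F_eq_sigmoid : F = sigmoid :=
  funext fun _ => one_div _

lemma mul_log_div_le_sub {p q : ℝ} (hp : 0 < p) (hq : 0 < q) : q * log (p / q) ≤ p - q :=
  calc q * log (p / q) ≤ q * (p / q - 1) :=
        mul_le_mul_of_nonneg_left (log_le_sub_one_of_pos (div_pos hp hq)) hq.le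
    _ = p - q := by field_simp

lemma mul_log_div_lt_sub {p q : ℝ} (hp : 0 < p) (hq : 0 < q) (hpq : p ≠ q) :
    q * log (p / q) < p - q :=
  calc q * log (p / q) < q * (p / q - 1) :=
        mul_lt_mul_of_pos_left (log_lt_sub_one_of_pos (div_pos hp hq) (div_ne_one_of_ne hpq)) hq
    _ = p - q := by field_simp

lemma binary_cross_entropy_lt {p q : ℝ} (hp0 : 0 < p) (hp1 : p < 1) (hq0 : 0 < q) (hq1 : q < 1)
    (hpq : p ≠ q) :
    q * log p + (1 - q) * log (1 - p) < q * log q + (1 - q) * log (1 - q) := by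
  have hp1' : 0 < 1 - p := sub_pos.mpr hp1
  have hq1' : 0 < 1 - q := sub_pos.mpr hq1
  have h₁ := mul_log_div_lt_sub hp0 hq0 hpq
  have h₂ := mul_log_div_le_sub hp1' hq1'
  rw [log_div hp0.ne' hq0.ne'] at h₁
  rw [log_div hp1'.ne' hq1'.ne'] at h₂
  linarith

/-- The log-likelihood of a single comparison when the true strength difference is `a` and the
model's difference is `x`. -/
noncomputable def pairLogLik (a x : ℝ) : ℝ :=
  F a * log (F x) + F (-a) * log (F (-x))

lemma pairLogLik_lt {a x : ℝ} (hxa : x ≠ a) : pairLogLik a x < pairLogLik a a := by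
  simp only [pairLogLik, F_eq_sigmoid, sigmoid_neg]
  exact binary_cross_entropy_lt (sigmoid_pos x) (sigmoid_lt_one x) (sigmoid_pos a)
    (sigmoid_lt_one a) (sigmoid_injective.ne hxa)

lemma pairLogLik_le (a x : ℝ) : pairLogLik a x ≤ pairLogLik a a := by
  rcases eq_or_ne x a with rfl | hxa
  · exact le_rfl
  · exact (pairLogLik_lt hxa).le

lemma SimpleGraph.Reachable.eq_of_forall_adj {V β : Type*} {G : SimpleGraph V} {f : V → β}
    (hf : ∀ u w, G.Adj u w → f u = f w) {u v : V} (huv : G.Reachable u v) : f u = f v := by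
  obtain ⟨walk⟩ := huv
  induction walk with
  | nil => rfl
  | cons hadj _ ih => exact (hf _ _ hadj).trans ih

lemma SimpleGraph.Preconnected.eq_of_forall_rel_sub_eq {V A : Type*} [AddCommGroup A]
    {r : V → V → Prop} (hconn : (SimpleGraph.fromRel r).Preconnected) {f g : V → A}
    (hfg : ∀ i j, r i j → f j - f i = g j - g i) {v : V} (hv : f v = g v) : f = g := by
  have hadj : ∀ u w, (SimpleGraph.fromRel r).Adj u w → f u - g u = f w - g w := by
    rintro u w ⟨-, h | h⟩
    · exact (sub_eq_sub_iff_sub_eq_sub.mp (hfg u w h)).symm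
    · exact sub_eq_sub_iff_sub_eq_sub.mp (hfg w u h)
  funext u
  have huv := (hconn u v).eq_of_forall_adj hadj
  rwa [hv, sub_self, sub_eq_zero] at huv

theorem BT_MLE_recovers_true_parameters (n : ℕ)
    (I : Finset (Fin (n + 1) × Fin (n + 1)))
    (hconn : (SimpleGraph.fromRel (fun i j => (i, j) ∈ I)).Connected)
    (m0 : Fin (n + 1) → ℝ) (hm0 : m0 0 = 0)
    (L : (Fin (n + 1) → ℝ) → ℝ)
    (hL : ∀ m, L m = ∑ p ∈ I,
      (F (m0 p.2 - m0 p.1) * Real.log (F (m p.2 - m p.1)) +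
       F (m0 p.1 - m0 p.2) * Real.log (F (m p.1 - m p.2)))) :
    ∀ m : Fin (n + 1) → ℝ, m 0 = 0 →
      L m ≤ L m0 ∧ (L m = L m0 → m = m0) := by
  intro m hm
  have hL' : ∀ m', L m' = ∑ p ∈ I, pairLogLik (m0 p.2 - m0 p.1) (m' p.2 - m' p.1) := by
    simp only [hL, pairLogLik, neg_sub, implies_true]
  have hle : ∀ p ∈ I, pairLogLik (m0 p.2 - m0 p.1) (m p.2 - m p.1) ≤
      pairLogLik (m0 p.2 - m0 p.1) (m0 p.2 - m0 p.1) :=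
    fun p _ => pairLogLik_le _ _
  rw [hL', hL']
  refine ⟨Finset.sum_le_sum hle, fun heq => ?_⟩
  have hdiff : ∀ p ∈ I, m p.2 - m p.1 = m0 p.2 - m0 p.1 := by
    intro p hp
    by_contra hne
    exact ((Finset.sum_eq_sum_iff_of_le hle).mp heq p hp).not_lt (pairLogLik_lt hne)
  exact hconn.preconnected.eq_of_forall_rel_sub_eq (fun i j hij => hdiff (i, j) hij)
    (hm.trans hm0.symm)
end
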